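/- arXiv:1510.08724 — 6 statements merged into one kernel-verified Lean document; each statement's English description precedes it below -/
import Mathlib

section
/- Let G be a topological group acting continuously on topological spaces X and Y, and let k ≥ 1 be an integer. If there exists a continuous G-equivariant map f : X → Y and a continuous map g : Y → X such that f ∘ g is homotopic to the identity of Y, then TC^{G,k}(Y) ≤ TC^{G,k}(X). -/
open Set

/-- The space of `k`-tuples of paths in `X` that are consecutive up to the `G`-action:
the `(i+1)`-st path starts in the `G`-orbit of the endpoint of the `i`-th path. -/
def effPk (G X : Type*) [Group G] [TopologicalSpace X] [MulAction G X] (k : ℕ) :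
    Set (Fin k → C(unitInterval, X)) :=
  {γ | ∀ (i : ℕ) (h : i + 1 < k),
    γ ⟨i + 1, h⟩ 0 ∈ MulAction.orbit G (γ ⟨i, Nat.lt_of_succ_lt h⟩ 1)}

/-- A `(G,k)`-motion planner on `U ⊆ X × X`: a continuous section over `U` of the map
`π_k` sending a `k`-tuple of consecutive-up-to-`G` paths to its (start, end) pair. -/
def IsEffPlanner (G X : Type*) [Group G] [TopologicalSpace X] [MulAction G X]
    (k : ℕ) (hk : 0 < k) (U : Set (X × X)) : Prop :=
  ∃ s : U → (Fin k → C(unitInterval, X)),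
    Continuous s ∧ (∀ u, s u ∈ effPk G X k) ∧
    ∀ u : U, (s u ⟨0, hk⟩) 0 = (u : X × X).1 ∧
      (s u ⟨k - 1, Nat.sub_lt hk Nat.one_pos⟩) 1 = (u : X × X).2

/-- `TC^{G,k}(X)`: the least `ℓ ≥ 1` such that `X × X` admits an open cover by `ℓ` sets,
each admitting a `(G,k)`-motion planner; `∞` if there is no such `ℓ`. -/
noncomputable def effTC (G X : Type*) [Group G] [TopologicalSpace X] [MulAction G X]
    (k : ℕ) (hk : 0 < k) : ℕ∞ :=
  sInf {ℓ : ℕ∞ | ∃ n : ℕ, ℓ = n ∧ 1 ≤ n ∧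
    ∃ U : Fin n → Set (X × X), (∀ i, IsOpen (U i)) ∧ (⋃ i, U i) = Set.univ ∧
      ∀ i, IsEffPlanner G X k hk (U i)}

/-- Effective topological complexity `TC^{G,∞}(X)`: the minimum of `TC^{G,k}(X)` over `k ≥ 1`. -/
noncomputable def effTCinf (G X : Type*) [Group G] [TopologicalSpace X] [MulAction G X] : ℕ∞ :=
  ⨅ k : ℕ, effTC G X (k + 1) k.succ_pos

/-- Farber's (non-reduced) topological complexity `TC(X)`. -/
noncomputable def farberTC (X : Type*) [TopologicalSpace X] : ℕ∞ :=
  sInf {ℓ : ℕ∞ | ∃ n : ℕ, ℓ = n ∧ 1 ≤ n ∧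
    ∃ U : Fin n → Set (X × X), (∀ i, IsOpen (U i)) ∧ (⋃ i, U i) = Set.univ ∧
      ∀ i, ∃ s : (U i) → C(unitInterval, X), Continuous s ∧
        ∀ u : (U i), (s u) 0 = (u : X × X).1 ∧ (s u) 1 = (u : X × X).2}

/-!
Pull an open cover of `X × X` back along `g × g`. Over a piece, push the planner's paths forward
by `f`; equivariance keeps consecutive endpoints in a common orbit. The resulting tuple runs from
`f (g y₁)` to `f (g y₂)`, and prepending resp. appending the tracks of the homotopy `f ∘ g ≃ id`
makes it run from `y₁` to `y₂`.
-/

open unitInterval ContinuousMap Function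

section Families

variable {G X Y V W : Type*} [Group G] [TopologicalSpace X] [TopologicalSpace Y]
  [TopologicalSpace V] [TopologicalSpace W] [MulAction G X] [MulAction G Y] {k : ℕ} {hk : 0 < k}

def IsEffFamily (G : Type*) [Group G] [MulAction G X] (k : ℕ) (hk : 0 < k) (a b : C(V, X)) :
    Prop :=
  ∃ s : V → (Fin k → C(I, X)),
    Continuous s ∧ (∀ v, s v ∈ effPk G X k) ∧
    ∀ v, s v ⟨0, hk⟩ 0 = a v ∧ s v ⟨k - 1, Nat.sub_lt hk Nat.one_pos⟩ 1 = b v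

theorem isEffPlanner_iff_isEffFamily {U : Set (X × X)} :
    IsEffPlanner G X k hk U ↔
      IsEffFamily G k hk (fst.comp (restrict U (.id _))) (snd.comp (restrict U (.id _))) :=
  Iff.rfl

theorem update_apply_apply_of_apply_eq {ι : Type*} [DecidableEq ι] {γ : ι → C(I, X)} {j : ι}
    {δ : C(I, X)} {t : I} (h : δ t = γ j t) (i : ι) : update γ j δ i t = γ i t := by
  rcases eq_or_ne i j with rfl | hij
  · simpa using h
  · rw [update_of_ne hij]

theorem update_mem_effPk {γ : Fin k → C(I, X)} (hγ : γ ∈ effPk G X k) {j : Fin k}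
    {δ : C(I, X)} (h₀ : 0 < j.val → δ 0 = γ j 0) (h₁ : j.val + 1 < k → δ 1 = γ j 1) :
    update γ j δ ∈ effPk G X k := by
  intro i h
  have e₀ : update γ j δ ⟨i + 1, h⟩ 0 = γ ⟨i + 1, h⟩ 0 := by
    rcases eq_or_ne ⟨i + 1, h⟩ j with rfl | hj
    · simpa using h₀ i.succ_pos
    · rw [update_of_ne hj]
  have e₁ : update γ j δ ⟨i, Nat.lt_of_succ_lt h⟩ 1 = γ ⟨i, Nat.lt_of_succ_lt h⟩ 1 := by
    rcases eq_or_ne ⟨i, Nat.lt_of_succ_lt h⟩ j with rfl | hj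
    · simpa using h₁ h
    · rw [update_of_ne hj]
  rw [e₀, e₁]
  exact hγ i h

theorem IsEffFamily.comp {a b : C(V, X)} (hs : IsEffFamily G k hk a b) (φ : C(W, V)) :
    IsEffFamily G k hk (a.comp φ) (b.comp φ) := by
  obtain ⟨s, hcont, hmem, hends⟩ := hs
  exact ⟨s ∘ φ, hcont.comp φ.continuous, fun w ↦ hmem (φ w), fun w ↦ hends (φ w)⟩

theorem IsEffFamily.map {a b : C(V, X)} (hs : IsEffFamily G k hk a b) (f : C(X, Y))
    (hf : ∀ (a : G) (x : X), f (a • x) = a • f x) :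
    IsEffFamily G k hk (f.comp a) (f.comp b) := by
  obtain ⟨s, hcont, hmem, hends⟩ := hs
  refine ⟨fun v i ↦ f.comp (s v i), ?_, fun v i h ↦ ?_, fun v ↦ ?_⟩
  · exact continuous_pi fun i ↦ (continuous_postcomp f).comp ((continuous_apply i).comp hcont)
  · obtain ⟨c, hc⟩ := hmem v i h
    exact ⟨c, by simp [← hf, ← hc]⟩
  · simp [hends v]

theorem IsEffFamily.of_homotopic_left {a a' b : C(V, X)} (hs : IsEffFamily G k hk a b)
    (h : a'.Homotopic a) : IsEffFamily G k hk a' b := by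
  obtain ⟨s, hcont, hmem, hends⟩ := hs
  obtain ⟨H⟩ := h
  let first : ∀ v, Path (a v) (s v ⟨0, hk⟩ 1) := fun v ↦ ⟨s v ⟨0, hk⟩, (hends v).1, rfl⟩
  let δ : V → C(I, X) := fun v ↦ ((H.evalAt v).trans (first v)).toContinuousMap
  have hδ : Continuous δ := by
    refine continuous_of_continuous_uncurry _ (Path.trans_continuous_family _ ?_ _ ?_)
    · exact H.continuous.comp continuous_swap
    · exact continuous_eval.comp (((continuous_apply _).comp hcont).prodMap continuous_id)
  refine ⟨fun v ↦ update (s v) ⟨0, hk⟩ (δ v), hcont.update _ hδ, fun v ↦ ?_, fun v ↦ ?_⟩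
  · exact update_mem_effPk (hmem v) (by simp) fun _ ↦ ((H.evalAt v).trans (first v)).target
  · have hδ₁ : δ v 1 = s v ⟨0, hk⟩ 1 := ((H.evalAt v).trans (first v)).target
    simp only [update_apply_apply_of_apply_eq hδ₁, (hends v).2, update_self]
    exact ⟨((H.evalAt v).trans (first v)).source, trivial⟩

theorem IsEffFamily.of_homotopic_right {a b b' : C(V, X)} (hs : IsEffFamily G k hk a b)
    (h : b.Homotopic b') : IsEffFamily G k hk a b' := by
  obtain ⟨s, hcont, hmem, hends⟩ := hs
  obtain ⟨H⟩ := h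
  let last : ∀ v, Path (s v ⟨k - 1, Nat.sub_lt hk Nat.one_pos⟩ 0) (b v) :=
    fun v ↦ ⟨s v ⟨k - 1, Nat.sub_lt hk Nat.one_pos⟩, rfl, (hends v).2⟩
  let δ : V → C(I, X) := fun v ↦ ((last v).trans (H.evalAt v)).toContinuousMap
  have hδ : Continuous δ := by
    refine continuous_of_continuous_uncurry _ (Path.trans_continuous_family _ ?_ _ ?_)
    · exact continuous_eval.comp (((continuous_apply _).comp hcont).prodMap continuous_id)
    · exact H.continuous.comp continuous_swap
  refine ⟨fun v ↦ update (s v) ⟨k - 1, Nat.sub_lt hk Nat.one_pos⟩ (δ v), hcont.update _ hδ,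
    fun v ↦ ?_, fun v ↦ ?_⟩
  · exact update_mem_effPk (hmem v) (fun _ ↦ ((last v).trans (H.evalAt v)).source)
      (by dsimp only; omega)
  · have hδ₀ : δ v 0 = s v ⟨k - 1, Nat.sub_lt hk Nat.one_pos⟩ 0 :=
      ((last v).trans (H.evalAt v)).source
    simp only [update_apply_apply_of_apply_eq hδ₀, (hends v).1, update_self]
    exact ⟨trivial, ((last v).trans (H.evalAt v)).target⟩

theorem IsEffPlanner.preimage_prodMap {U : Set (X × X)} (hU : IsEffPlanner G X k hk U)
    (f : C(X, Y)) (g : C(Y, X)) (hf : ∀ (a : G) (x : X), f (a • x) = a • f x)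
    (hfg : (f.comp g).Homotopic (ContinuousMap.id Y)) :
    IsEffPlanner G Y k hk (g.prodMap g ⁻¹' U) := by
  let φ : C(g.prodMap g ⁻¹' U, U) := ⟨fun v ↦ ⟨g.prodMap g v, v.2⟩, by fun_prop⟩
  have hpull (p : C(g.prodMap g ⁻¹' U, Y)) : p.Homotopic ((f.comp g).comp p) := by
    simpa using hfg.symm.comp (.refl p)
  rw [isEffPlanner_iff_isEffFamily] at hU ⊢
  exact (((hU.comp φ).map f hf).of_homotopic_left (hpull _)).of_homotopic_right
    (hpull (snd.comp (restrict _ (.id _)))).symm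

theorem effTC_le_of_isEffPlanner_preimage (Φ : C(Y × Y, X × X))
    (hΦ : ∀ U, IsEffPlanner G X k hk U → IsEffPlanner G Y k hk (Φ ⁻¹' U)) :
    effTC G Y k hk ≤ effTC G X k hk := by
  refine sInf_le_sInf ?_
  rintro _ ⟨n, rfl, hn, U, hopen, hcover, hplan⟩
  refine ⟨n, rfl, hn, fun i ↦ Φ ⁻¹' U i, fun i ↦ (hopen i).preimage Φ.continuous, ?_,
    fun i ↦ hΦ _ (hplan i)⟩
  rw [← preimage_iUnion, hcover, preimage_univ]

end Families

theorem effTC_le_of_domination_general {G : Type*} [Group G]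
    {X Y : Type*} [TopologicalSpace X] [TopologicalSpace Y]
    [MulAction G X] [MulAction G Y]
    (f : C(X, Y)) (g : C(Y, X))
    (hf : ∀ (a : G) (x : X), f (a • x) = a • f x)
    (hfg : (f.comp g).Homotopic (ContinuousMap.id Y))
    (k : ℕ) (hk : 1 ≤ k) :
    effTC G Y k hk ≤ effTC G X k hk :=
  effTC_le_of_isEffPlanner_preimage (g.prodMap g) fun _ hU ↦ hU.preimage_prodMap f g hf hfg

/-- If `f : X → Y` is a continuous `G`-equivariant map and `g : Y → X` is a
continuous map with `f ∘ g` homotopic to the identity of `Y`, then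
`TC^{G,k}(Y) ≤ TC^{G,k}(X)` for every `k ≥ 1`. -/
theorem effTC_le_of_domination {G : Type*} [Group G] [TopologicalSpace G] [IsTopologicalGroup G]
    {X Y : Type*} [TopologicalSpace X] [TopologicalSpace Y]
    [MulAction G X] [MulAction G Y] [ContinuousSMul G X] [ContinuousSMul G Y]
    (f : C(X, Y)) (g : C(Y, X))
    (hf : ∀ (a : G) (x : X), f (a • x) = a • f x)
    (hfg : (f.comp g).Homotopic (ContinuousMap.id Y))
    (k : ℕ) (hk : 1 ≤ k) :
    effTC G Y k hk ≤ effTC G X k hk :=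
  effTC_le_of_domination_general f g hf hfg k hk
end

section
/- Let G be a topological group acting continuously on a topological space X. If X is G-contractible, i.e. there exists a point x₀ ∈ X and a G-homotopy from the identity map of X to a continuous G-equivariant map whose image is contained in the orbit G·x₀, then the effective topological complexity satisfies TC^{G,∞}(X) = 1; that is, for some k ≥ 1 there is a (G,k)-motion planner defined on all of X × X. -/
open Set

/-! Follow the contraction from the start point `x` to `c x`, then jump within the orbit `G • x₀`
(which contains both `c x` and `c y`) to `c y`, and follow the contraction backwards to the end
point `y`. These two paths form a `(G,2)`-motion planner on all of `X × X`, so already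
`TC^{G,2}(X) = 1`. -/

open ContinuousMap unitInterval

def ContinuousMap.Homotopy.tracks {X Y : Type*} [TopologicalSpace X] [TopologicalSpace Y]
    {f g : C(X, Y)} (F : Homotopy f g) : C(X, C(I, Y)) :=
  (F.toContinuousMap.comp prodSwap).curry

@[simp]
theorem ContinuousMap.Homotopy.tracks_apply {X Y : Type*} [TopologicalSpace X]
    [TopologicalSpace Y] {f g : C(X, Y)} (F : Homotopy f g) (x : X) (t : I) :
    F.tracks x t = F (t, x) :=
  rfl

section EffectiveTC

variable {G X : Type*} [Group G] [TopologicalSpace X] [MulAction G X]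

theorem one_le_effTCinf : 1 ≤ effTCinf G X :=
  le_iInf fun _ => le_sInf fun _ ⟨_, hℓ, hn, _⟩ => hℓ ▸ mod_cast hn

theorem effTC_le_one_of_isEffPlanner_univ {k : ℕ} {hk : 0 < k}
    (h : IsEffPlanner G X k hk univ) : effTC G X k hk ≤ 1 :=
  sInf_le ⟨1, Nat.cast_one.symm, le_rfl, fun _ => univ, fun _ => isOpen_univ,
    iUnion_const univ, fun _ => h⟩

theorem effTCinf_eq_one_of_isEffPlanner_univ {k : ℕ}
    (h : IsEffPlanner G X (k + 1) k.succ_pos univ) : effTCinf G X = 1 :=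
  le_antisymm ((iInf_le _ k).trans (effTC_le_one_of_isEffPlanner_univ h)) one_le_effTCinf

theorem isEffPlanner_two_univ (p q : C(X, C(I, X))) (hp : ∀ x, p x 0 = x) (hq : ∀ y, q y 1 = y)
    (horbit : ∀ x y, q y 0 ∈ MulAction.orbit G (p x 1)) :
    IsEffPlanner G X 2 two_pos univ := by
  refine ⟨fun u => ![p (u : X × X).1, q (u : X × X).2], ?_, ?_, fun u => ⟨hp _, hq _⟩⟩
  · refine continuous_pi fun i => ?_
    fin_cases i
    · exact p.continuous.comp (continuous_fst.comp continuous_subtype_val)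
    · exact q.continuous.comp (continuous_snd.comp continuous_subtype_val)
  · intro u i hi
    obtain rfl : i = 0 := by omega
    exact horbit _ _

theorem isEffPlanner_two_univ_of_homotopy_to_orbit {c : C(X, X)} (x₀ : X)
    (hrange : ∀ x, c x ∈ MulAction.orbit G x₀) (F : Homotopy (ContinuousMap.id X) c) :
    IsEffPlanner G X 2 two_pos univ := by
  refine isEffPlanner_two_univ F.tracks F.symm.tracks (by simp) (by simp) fun x y => ?_
  have same_orbit : MulAction.orbit G (c y) = MulAction.orbit G (c x) :=
    (MulAction.orbit_eq_iff.2 (hrange y)).trans (MulAction.orbit_eq_iff.2 (hrange x)).symm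
  simpa using MulAction.orbit_eq_iff.1 same_orbit

end EffectiveTC

theorem effTCinf_of_G_contractible_general {G : Type*} [Group G] {X : Type*} [TopologicalSpace X]
    [MulAction G X]
    (x₀ : X) (c : C(X, X))
    (hrange : ∀ x : X, c x ∈ MulAction.orbit G x₀)
    (F : ContinuousMap.Homotopy (ContinuousMap.id X) c) :
    effTCinf G X = 1 ∧
    ∃ (k : ℕ) (hk : 0 < k), IsEffPlanner G X k hk Set.univ := by
  have planner := isEffPlanner_two_univ_of_homotopy_to_orbit x₀ hrange F
  exact ⟨effTCinf_eq_one_of_isEffPlanner_univ planner, 2, two_pos, planner⟩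

/-- If `X` is `G`-contractible — i.e. there are a point `x₀ ∈ X`, a continuous
`G`-equivariant map `c : X → X` with values in the orbit `G • x₀`, and a `G`-homotopy from the
identity of `X` to `c` — then `TC^{G,∞}(X) = 1`; in particular for some `k ≥ 1` there is a
`(G,k)`-motion planner defined on all of `X × X`. -/
theorem effTCinf_of_G_contractible {G : Type*} [Group G] [TopologicalSpace G]
    [IsTopologicalGroup G] {X : Type*} [TopologicalSpace X] [MulAction G X] [ContinuousSMul G X]
    (x₀ : X) (c : C(X, X))
    (hc : ∀ (a : G) (x : X), c (a • x) = a • c x)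
    (hrange : ∀ x : X, c x ∈ MulAction.orbit G x₀)
    (F : ContinuousMap.Homotopy (ContinuousMap.id X) c)
    (hF : ∀ (a : G) (x : X) (t : unitInterval), F (t, a • x) = a • F (t, x)) :
    effTCinf G X = 1 ∧
    ∃ (k : ℕ) (hk : 0 < k), IsEffPlanner G X k hk Set.univ :=
  effTCinf_of_G_contractible_general x₀ c hrange F
end

section
/- Let G be a finite group acting continuously and freely on a Hausdorff topological space X (i.e. g·x = x implies g = e). Then for every integer k ≥ 2, any open subset U ⊆ X × X admitting a (G,k+1)-motion planner also admits a (G,k)-motion planner; consequently TC^{G,k}(X) = TC^{G,2}(X) for all k ≥ 2, and in particular the effective topological complexity satisfies TC^{G,∞}(X) = TC^{G,2}(X). -/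
open Set

/-!
Appending a constant path turns a `(G,k)`-planner into a `(G,k+1)`-planner. Conversely, given a
`(G,k+1)`-planner with `k ≥ 2`, let `g u` be the group element with
`g u • γ₁(1) = γ₂(0)`; replacing `γ₁, γ₂` by the single path `γ₁ · (g u)⁻¹ γ₂` gives a
`(G,k)`-planner, the endpoint being untouched because the last path is not moved. Since the
action is free, `g u` is unique, so each fibre of `g` is the closed set
`{u | c • γ₁(1) = γ₂(0)}` (closed as `X` is Hausdorff); finitely many closed fibres make `g`
continuous, hence so is the merged path.
-/

open MulAction unitInterval

theorem continuous_of_isClosed_preimage_singleton {α β : Type*} [TopologicalSpace α]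
    [TopologicalSpace β] [Finite β] {f : α → β} (hf : ∀ b, IsClosed (f ⁻¹' {b})) :
    Continuous f :=
  continuous_iff_isClosed.mpr fun s _ => by
    rw [← biUnion_preimage_singleton]
    exact (toFinite s).isClosed_biUnion fun b _ => hf b

theorem continuous_of_smul_eq {G X Y : Type*} [Group G] [Finite G] [TopologicalSpace G]
    [TopologicalSpace X] [T2Space X] [MulAction G X] [ContinuousConstSMul G X]
    [TopologicalSpace Y] (hfree : ∀ (a : G) (x : X), a • x = x → a = 1)
    {a b : Y → X} (ha : Continuous a) (hb : Continuous b) {g : Y → G}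
    (hg : ∀ y, g y • a y = b y) : Continuous g := by
  refine continuous_of_isClosed_preimage_singleton fun c => ?_
  have hfiber : g ⁻¹' {c} = {y | c • a y = b y} := by
    ext y
    refine ⟨fun hy => hy ▸ hg y, fun hy => ?_⟩
    have h1 : ((g y)⁻¹ * c) • a y = a y := by rw [mul_smul, hy, ← hg y, inv_smul_smul]
    exact inv_mul_eq_one.mp (hfree _ _ h1)
  rw [hfiber]
  exact isClosed_eq (ha.const_smul c) hb

theorem continuous_pathTrans_family {X Y : Type*} [TopologicalSpace X] [TopologicalSpace Y]
    {p q : Y → C(I, X)} (hp : Continuous p) (hq : Continuous q) (h : ∀ y, p y 1 = q y 0) :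
    Continuous fun y =>
      ((⟨p y, rfl, h y⟩ : Path (p y 0) (q y 0)).trans ⟨q y, rfl, rfl⟩).toContinuousMap :=
  ContinuousMap.continuous_of_continuous_uncurry _ <|
    Path.trans_continuous_family (fun y => (⟨p y, rfl, h y⟩ : Path (p y 0) (q y 0)))
      (hp.fst'.eval continuous_snd) (fun y => (⟨q y, rfl, rfl⟩ : Path (q y 0) (q y 1)))
      (hq.fst'.eval continuous_snd)

section Planners

variable {G X : Type*} [Group G] [TopologicalSpace X] [MulAction G X]

theorem cons_mem_effPk {k : ℕ} {p : C(I, X)} {γ : Fin (k + 1) → C(I, X)}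
    (h₀ : γ 0 0 ∈ orbit G (p 1)) (hγ : γ ∈ effPk G X (k + 1)) :
    Fin.cons p γ ∈ effPk G X (k + 2)
  | 0, _ => h₀
  | i + 1, hi => hγ i (by omega)

theorem tail_mem_effPk {k : ℕ} {γ : Fin (k + 2) → C(I, X)} (hγ : γ ∈ effPk G X (k + 2)) :
    Fin.tail γ ∈ effPk G X (k + 1) :=
  fun i hi => hγ (i + 1) (by omega)

theorem effTC_le_effTC_of_imp {k k' : ℕ} (hk : 0 < k) (hk' : 0 < k')
    (himp : ∀ U : Set (X × X), IsEffPlanner G X k hk U → IsEffPlanner G X k' hk' U) :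
    effTC G X k' hk' ≤ effTC G X k hk := by
  apply sInf_le_sInf
  rintro ℓ ⟨n, rfl, hn, Us, hopen, hcover, hplan⟩
  exact ⟨n, rfl, hn, Us, hopen, hcover, fun i => himp _ (hplan i)⟩

namespace IsEffPlanner

variable {U : Set (X × X)}

theorem succ {k : ℕ} {hk : 0 < k} (h : IsEffPlanner G X k hk U) :
    IsEffPlanner G X (k + 1) k.succ_pos U := by
  obtain ⟨n, rfl⟩ := Nat.exists_eq_succ_of_ne_zero hk.ne'
  obtain ⟨s, hs, hmem, hends⟩ := h
  refine ⟨fun u => Fin.cons (ContinuousMap.const I u.1.1) (s u), ?_, fun u => ?_,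
    fun u => ⟨rfl, (hends u).2⟩⟩
  · exact (ContinuousMap.continuous_const'.comp
      (continuous_fst.comp continuous_subtype_val)).finCons hs
  · exact cons_mem_effPk ((hends u).1 ▸ mem_orbit_self _) (hmem u)

theorem of_le {k k' : ℕ} {hk : 0 < k} (h : IsEffPlanner G X k hk U) (hkk' : k ≤ k') :
    IsEffPlanner G X k' (hk.trans_le hkk') U := by
  induction k', hkk' using Nat.le_induction with
  | base => exact h
  | succ n _ ih => exact ih.succ

variable [Finite G] [TopologicalSpace G] [DiscreteTopology G] [T2Space X] [ContinuousSMul G X]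

theorem merge (hfree : ∀ (a : G) (x : X), a • x = x → a = 1) {n : ℕ}
    (h : IsEffPlanner G X (n + 3) (n + 2).succ_pos U) :
    IsEffPlanner G X (n + 2) (n + 1).succ_pos U := by
  obtain ⟨s, hs, hmem, hends⟩ := h
  have hpath : ∀ i, Continuous fun u => s u i := fun i => (continuous_apply i).comp hs
  have hstep : ∀ u, s u 1 0 ∈ orbit G (s u 0 1) := fun u => hmem u 0 (by omega)
  choose g hg using fun u => mem_orbit_iff.mp (hstep u)
  have hg_cont : Continuous g := continuous_of_smul_eq hfree
    ((continuous_eval_const 1).comp (hpath 0)) ((continuous_eval_const 0).comp (hpath 1)) hg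
  let q : U → C(I, X) := fun u => (g u)⁻¹ • s u 1
  have hq : Continuous q := ((continuous_of_discreteTopology (f := fun a : G => a⁻¹)).comp
    hg_cont).smul (hpath 1)
  have hq₀ : ∀ u, s u 0 1 = q u 0 := fun u => by
    change _ = (g u)⁻¹ • s u 1 0
    rw [← hg u, inv_smul_smul]
  let merged : U → C(I, X) := fun u =>
    ((⟨s u 0, rfl, hq₀ u⟩ : Path (s u 0 0) (q u 0)).trans ⟨q u, rfl, rfl⟩).toContinuousMap
  have hmerged₀ : ∀ u, merged u 0 = s u 0 0 := fun u => Path.source _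
  have hmerged₁ : ∀ u, merged u 1 = (g u)⁻¹ • s u 1 1 := fun u => Path.target _
  refine ⟨fun u => Fin.cons (merged u) (Fin.tail (Fin.tail (s u))),
    (continuous_pathTrans_family (hpath 0) hq hq₀).finCons (continuous_pi fun i => hpath _),
    fun u => ?_, fun u => ⟨(hmerged₀ u).trans (hends u).1, (hends u).2⟩⟩
  refine cons_mem_effPk ?_ (tail_mem_effPk (tail_mem_effPk (hmem u)))
  change s u 2 0 ∈ orbit G (merged u 1)
  rw [hmerged₁, orbit_smul]
  exact hmem u 1 (by omega)

theorem two_of_le (hfree : ∀ (a : G) (x : X), a • x = x → a = 1) {k : ℕ} (hk : 2 ≤ k)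
    (h : IsEffPlanner G X k (two_pos.trans_le hk) U) : IsEffPlanner G X 2 two_pos U := by
  induction k, hk using Nat.le_induction with
  | base => exact h
  | succ n hn ih =>
    obtain ⟨m, rfl⟩ : ∃ m, n = m + 2 := ⟨n - 2, by omega⟩
    exact ih (h.merge hfree)

end IsEffPlanner

theorem effTC_eq_effTC_two [Finite G] [TopologicalSpace G] [DiscreteTopology G] [T2Space X]
    [ContinuousSMul G X] (hfree : ∀ (a : G) (x : X), a • x = x → a = 1) {k : ℕ}
    (hk : 2 ≤ k) :
    effTC G X k (two_pos.trans_le hk) = effTC G X 2 two_pos :=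
  le_antisymm (effTC_le_effTC_of_imp _ _ fun _ h => h.of_le hk)
    (effTC_le_effTC_of_imp _ _ fun _ h => h.two_of_le hfree hk)

end Planners

/-- For a finite group `G` (with the discrete topology) acting continuously
and freely on a Hausdorff space `X`: for every `k ≥ 2`, any open `U ⊆ X × X` with a
`(G,k+1)`-motion planner also has a `(G,k)`-motion planner; consequently
`TC^{G,k}(X) = TC^{G,2}(X)` for all `k ≥ 2` and `TC^{G,∞}(X) = TC^{G,2}(X)`. -/
theorem effTC_stabilizes_of_free {G : Type*} [Group G] [Finite G] [TopologicalSpace G]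
    [DiscreteTopology G] {X : Type*} [TopologicalSpace X] [T2Space X]
    [MulAction G X] [ContinuousSMul G X]
    (hfree : ∀ (a : G) (x : X), a • x = x → a = 1) :
    (∀ (k : ℕ) (hk : 2 ≤ k), ∀ U : Set (X × X), IsOpen U →
      IsEffPlanner G X (k + 1) (by omega) U → IsEffPlanner G X k (by omega) U) ∧
    (∀ (k : ℕ) (hk : 2 ≤ k), effTC G X k (by omega) = effTC G X 2 (by omega)) ∧
    effTCinf G X = effTC G X 2 (by omega) := by
  refine ⟨fun k hk U _ h => ?_, fun k hk => effTC_eq_effTC_two hfree hk, ?_⟩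
  · obtain ⟨n, rfl⟩ : ∃ n, k = n + 2 := ⟨k - 2, by omega⟩
    exact h.merge hfree
  · refine le_antisymm (iInf_le _ 1) (le_iInf fun k => ?_)
    rcases k with _ | k
    · exact effTC_le_effTC_of_imp _ _ fun _ h => h.succ
    · exact (effTC_eq_effTC_two hfree (by omega : 2 ≤ k + 2)).ge
end

section
/- Let n ≥ 1 and let Z/2 act on the unit sphere S^n ⊆ ℝ^{n+1} by the reflection g(x₀,…,x_n) = (−x₀, x₁,…,x_n), which interchanges the two hemispheres and fixes an equatorial (n−1)-sphere. Then there exists a (Z/2,3)-motion planner defined on all of S^n × S^n; in particular TC^{Z/2,3}(S^n) = 1 and the effective topological complexity satisfies TC^{Z/2,∞}(S^n) = 1. -/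
open Set

/-- The action of `ℤ/2` on `X` generated by an involution `f`. -/
def involutionAction {X : Type*} (f : X → X) (hf : ∀ x, f (f x) = x) :
    MulAction (Multiplicative (ZMod 2)) X where
  smul g x := if g.toAdd = 1 then f x else x
  one_smul x := by
    show (if (Multiplicative.toAdd (1 : Multiplicative (ZMod 2))) = 1 then f x else x) = x
    simp
  mul_smul a b x := by
    have hcases : ∀ z : ZMod 2, z = 0 ∨ z = 1 := by decide
    show (if (Multiplicative.toAdd (a * b)) = 1 then f x else x) =
      (if a.toAdd = 1 then f (if b.toAdd = 1 then f x else x) else (if b.toAdd = 1 then f x else x))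
    rcases hcases a.toAdd with ha | ha <;> rcases hcases b.toAdd with hb | hb <;>
      simp [toAdd_mul, ha, hb, hf x]



/-- The linear involution of `ℝ^{n+1}` negating the first `m` coordinates. -/
def negOn (n m : ℕ) (x : EuclideanSpace ℝ (Fin (n + 1))) : EuclideanSpace ℝ (Fin (n + 1)) :=
  WithLp.toLp 2 (fun i => if (i : ℕ) < m then -x i else x i)

lemma negOn_norm (n m : ℕ) (x : EuclideanSpace ℝ (Fin (n + 1))) : ‖negOn n m x‖ = ‖x‖ := by
  simp only [EuclideanSpace.norm_eq]
  congr 1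
  refine Finset.sum_congr rfl fun i _ => ?_
  by_cases h : (i : ℕ) < m <;> simp [negOn, h]

/-- The involution of the sphere `S^n` induced by negating the first `m` coordinates. -/
def sphereNegOn (n m : ℕ) (x : Metric.sphere (0 : EuclideanSpace ℝ (Fin (n + 1))) 1) :
    Metric.sphere (0 : EuclideanSpace ℝ (Fin (n + 1))) 1 :=
  ⟨negOn n m x, by
    rw [mem_sphere_zero_iff_norm, negOn_norm]
    exact mem_sphere_zero_iff_norm.mp x.2⟩

lemma sphereNegOn_invol (n m : ℕ) (x : Metric.sphere (0 : EuclideanSpace ℝ (Fin (n + 1))) 1) :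
    sphereNegOn n m (sphereNegOn n m x) = x := by
  apply Subtype.ext
  ext i
  by_cases h : (i : ℕ) < m <;> simp [sphereNegOn, negOn, h]

/-!
Dropping the first coordinate identifies `S^n / (ℤ/2)` with the closed unit `n`-ball, and
`v ↦ (√(1 - ‖v‖²), v)` lifts the ball onto the upper hemisphere, sending every point of `S^n` to
its own orbit. A motion from `x` to `y` therefore jumps from `x` to the lift of its image, follows
the lift of the straight segment in the convex ball, and jumps back from the lift of the image of
`y` to `y`: three paths, the outer two constant.
-/

open scoped unitInterval

section EffectiveTC

variable {G X : Type*} [Group G] [TopologicalSpace X] [MulAction G X]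

lemma one_le_effTC (k : ℕ) (hk : 0 < k) : 1 ≤ effTC G X k hk :=
  le_sInf <| by
    rintro _ ⟨m, rfl, hm, -⟩
    exact_mod_cast hm

lemma effTC_eq_one_of_isEffPlanner_univ {k : ℕ} {hk : 0 < k}
    (h : IsEffPlanner G X k hk univ) : effTC G X k hk = 1 :=
  le_antisymm (sInf_le ⟨1, Nat.cast_one.symm, le_rfl, fun _ => univ, fun _ => isOpen_univ,
    iUnion_const _, fun _ => h⟩) (one_le_effTC k hk)

lemma effTCinf_eq_one_of_effTC_eq_one {k : ℕ} (h : effTC G X (k + 1) k.succ_pos = 1) :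
    effTCinf G X = 1 :=
  le_antisymm (h ▸ iInf_le (fun k : ℕ => effTC G X (k + 1) k.succ_pos) k)
    (le_iInf fun _ => one_le_effTC _ _)

theorem isEffPlanner_three_univ_of_orbit_section {Y : Type*} [TopologicalSpace Y]
    (q : C(X, Y)) (s : C(Y, X)) (hs : ∀ x, s (q x) ∈ MulAction.orbit G x)
    (hY : ∃ γ : Y × Y → C(I, Y), Continuous γ ∧ ∀ u, γ u 0 = u.1 ∧ γ u 1 = u.2) :
    IsEffPlanner G X 3 (by norm_num) univ := by
  obtain ⟨γ, hγ, hγ_ends⟩ := hY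
  refine ⟨fun u => ![.const I u.1.1, s.comp (γ (q u.1.1, q u.1.2)), .const I u.1.2],
    ?_, ?_, fun u => ⟨rfl, rfl⟩⟩
  · refine continuous_pi fun i => ?_
    fin_cases i
    · exact ContinuousMap.continuous_const'.comp (continuous_fst.comp continuous_subtype_val)
    · exact (ContinuousMap.continuous_postcomp s).comp (hγ.comp (by fun_prop))
    · exact ContinuousMap.continuous_const'.comp (continuous_snd.comp continuous_subtype_val)
  · rintro u i hi
    obtain rfl | rfl : i = 0 ∨ i = 1 := by omega
    · simpa [(hγ_ends _).1] using hs u.1.1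
    · simpa [(hγ_ends _).2] using MulAction.mem_orbit_symm.mp (hs u.1.2)

end EffectiveTC

theorem Convex.exists_motionPlanner {E : Type*} [AddCommGroup E] [Module ℝ E] [TopologicalSpace E]
    [ContinuousAdd E] [ContinuousSMul ℝ E] {s : Set E} (hs : Convex ℝ s) :
    ∃ γ : s × s → C(I, s), Continuous γ ∧ ∀ u, γ u 0 = u.1 ∧ γ u 1 = u.2 := by
  have hsegment :
      Continuous fun p : (s × s) × I => AffineMap.lineMap (p.1.1 : E) p.1.2 (p.2 : ℝ) := by
    simp only [AffineMap.lineMap_apply_module]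
    fun_prop
  refine ⟨fun u => ⟨fun t => ⟨AffineMap.lineMap (u.1 : E) u.2 (t : ℝ),
      hs.lineMap_mem u.1.2 u.2.2 t.2⟩, .subtype_mk (hsegment.comp (Continuous.prodMk_right u)) _⟩,
    ContinuousMap.continuous_of_continuous_uncurry _ (.subtype_mk hsegment _),
    fun u => ⟨?_, ?_⟩⟩ <;> ext <;> simp

lemma apply_mem_orbit_involutionAction {X : Type*} (f : X → X) (hf : ∀ x, f (f x) = x) (x : X) :
    f x ∈ @MulAction.orbit _ _ (involutionAction f hf).toSMul x :=
  ⟨Multiplicative.ofAdd 1, if_pos rfl⟩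

namespace EuclideanSpace

variable {n : ℕ}

def finCons (a : ℝ) (v : EuclideanSpace ℝ (Fin n)) : EuclideanSpace ℝ (Fin (n + 1)) :=
  WithLp.toLp 2 (Fin.cons a v)

def finTail (x : EuclideanSpace ℝ (Fin (n + 1))) : EuclideanSpace ℝ (Fin n) :=
  WithLp.toLp 2 (Fin.tail x)

lemma finCons_self_finTail (x : EuclideanSpace ℝ (Fin (n + 1))) :
    finCons (x 0) (finTail x) = x :=
  congrArg (WithLp.toLp 2) (Fin.cons_self_tail _)

lemma norm_finCons_sq (a : ℝ) (v : EuclideanSpace ℝ (Fin n)) :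
    ‖finCons a v‖ ^ 2 = a ^ 2 + ‖v‖ ^ 2 := by
  simp [EuclideanSpace.norm_sq_eq, Fin.sum_univ_succ, finCons]

lemma norm_finTail_le_one {x : EuclideanSpace ℝ (Fin (n + 1))} (hx : ‖x‖ = 1) :
    ‖finTail x‖ ≤ 1 := by
  have h := norm_finCons_sq (x 0) (finTail x)
  rw [finCons_self_finTail, hx] at h
  nlinarith [norm_nonneg (finTail x)]

lemma norm_finCons_sqrt_one_sub_sq {v : EuclideanSpace ℝ (Fin n)} (hv : ‖v‖ ≤ 1) :
    ‖finCons √(1 - ‖v‖ ^ 2) v‖ = 1 := by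
  have h : ‖finCons √(1 - ‖v‖ ^ 2) v‖ ^ 2 = 1 := by
    rw [norm_finCons_sq, Real.sq_sqrt (by nlinarith [norm_nonneg v])]
    ring
  exact (pow_eq_one_iff_of_nonneg (norm_nonneg _) two_ne_zero).mp h

lemma sqrt_one_sub_norm_finTail_sq {x : EuclideanSpace ℝ (Fin (n + 1))} (hx : ‖x‖ = 1) :
    √(1 - ‖finTail x‖ ^ 2) = |x 0| := by
  have h := norm_finCons_sq (x 0) (finTail x)
  rw [finCons_self_finTail, hx] at h
  rw [← Real.sqrt_sq_eq_abs]
  congr 1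
  linarith

end EuclideanSpace

open EuclideanSpace

lemma negOn_one_eq_finCons {n : ℕ} (x : EuclideanSpace ℝ (Fin (n + 1))) :
    negOn n 1 x = finCons (-x 0) (finTail x) := by
  ext i
  cases i using Fin.cases <;> simp [negOn, finCons, finTail, Fin.tail]

section Sphere

variable {n : ℕ}

local notation "𝕊" n => Metric.sphere (0 : EuclideanSpace ℝ (Fin (n + 1))) 1
local notation "𝔹" n => Metric.closedBall (0 : EuclideanSpace ℝ (Fin n)) 1

def sphereTail (n : ℕ) : C(𝕊 n, 𝔹 n) where
  toFun x :=
    ⟨finTail x, mem_closedBall_zero_iff.mpr (norm_finTail_le_one (norm_eq_of_mem_sphere x))⟩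
  continuous_toFun := .subtype_mk (by unfold finTail; fun_prop) _

noncomputable def hemisphereLift (n : ℕ) : C(𝔹 n, 𝕊 n) where
  toFun v := ⟨finCons √(1 - ‖(v : EuclideanSpace ℝ (Fin n))‖ ^ 2) v,
    mem_sphere_zero_iff_norm.mpr (norm_finCons_sqrt_one_sub_sq (mem_closedBall_zero_iff.mp v.2))⟩
  continuous_toFun := .subtype_mk (by unfold finCons; fun_prop) _

lemma hemisphereLift_sphereTail (x : 𝕊 n) :
    hemisphereLift n (sphereTail n x) = x ∨
      hemisphereLift n (sphereTail n x) = sphereNegOn n 1 x := by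
  have hx := norm_eq_of_mem_sphere x
  have hlift : (hemisphereLift n (sphereTail n x) : EuclideanSpace ℝ (Fin (n + 1))) =
      finCons |x.1 0| (finTail x) :=
    congrArg (finCons · _) (sqrt_one_sub_norm_finTail_sq hx)
  rcases le_or_gt 0 (x.1 0) with h | h
  · refine .inl (Subtype.ext ?_)
    rw [hlift, abs_of_nonneg h, finCons_self_finTail]
  · refine .inr (Subtype.ext ?_)
    rw [hlift, abs_of_neg h]
    exact (negOn_one_eq_finCons _).symm

end Sphere

/-- Let `ℤ/2` act on `S^n ⊆ ℝ^{n+1}` by the reflection negating the first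
coordinate (interchanging the two hemispheres, fixing an equatorial `(n-1)`-sphere). Then there
is a `(ℤ/2,3)`-motion planner on all of `S^n × S^n`; in particular `TC^{ℤ/2,3}(S^n) = 1` and
`TC^{ℤ/2,∞}(S^n) = 1`. -/
theorem effTCinf_sphere_reflection (n : ℕ) :
    @IsEffPlanner (Multiplicative (ZMod 2))
      (Metric.sphere (0 : EuclideanSpace ℝ (Fin (n + 1))) 1) _ _
      (involutionAction (sphereNegOn n 1) (sphereNegOn_invol n 1)) 3 (by norm_num)
      Set.univ ∧
    @effTC (Multiplicative (ZMod 2))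
      (Metric.sphere (0 : EuclideanSpace ℝ (Fin (n + 1))) 1) _ _
      (involutionAction (sphereNegOn n 1) (sphereNegOn_invol n 1)) 3 (by norm_num) = 1 ∧
    @effTCinf (Multiplicative (ZMod 2))
      (Metric.sphere (0 : EuclideanSpace ℝ (Fin (n + 1))) 1) _ _
      (involutionAction (sphereNegOn n 1) (sphereNegOn_invol n 1)) = 1 := by
  let _ := involutionAction (sphereNegOn n 1) (sphereNegOn_invol n 1)
  have hlift_mem_orbit : ∀ x, hemisphereLift n (sphereTail n x) ∈
      MulAction.orbit (Multiplicative (ZMod 2)) x := fun x => by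
    rcases hemisphereLift_sphereTail x with h | h <;> rw [h]
    exacts [MulAction.mem_orbit_self x, apply_mem_orbit_involutionAction _ _ x]
  have hplanner := isEffPlanner_three_univ_of_orbit_section (G := Multiplicative (ZMod 2))
    (sphereTail n) (hemisphereLift n) hlift_mem_orbit
    (convex_closedBall 0 1).exists_motionPlanner
  have hTC := effTC_eq_one_of_isEffPlanner_univ hplanner
  exact ⟨hplanner, hTC, effTCinf_eq_one_of_effTC_eq_one hTC⟩
end

section
/- Let X be a topological space and A ⊆ X a closed subspace. Let Y = X ∪_A X be the adjunction space obtained as the quotient of X × {0,1} by identifying (a,0) with (a,1) for every a ∈ A, equipped with the Z/2-action induced by the swap (x,i) ↦ (x,1−i), which interchanges the two copies of X. Then the effective topological complexity satisfies TC^{Z/2,∞}(Y) ≤ TC(X), where TC(X) is Farber's (non-reduced) topological complexity of X. -/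
open Set

/-- The identification relation of the adjunction space `X ∪_A X`: two copies of `X`
(indexed by `Bool`) glued along `A`. -/
def adjRel (X : Type*) (A : Set X) (p q : X × Bool) : Prop :=
  p = q ∨ (p.1 = q.1 ∧ p.1 ∈ A)

/-- The adjunction space `X ∪_A X`, with the quotient topology. -/
def AdjSpace (X : Type*) [TopologicalSpace X] (A : Set X) : Type _ := Quot (adjRel X A)

instance (X : Type*) [TopologicalSpace X] (A : Set X) : TopologicalSpace (AdjSpace X A) :=
  instTopologicalSpaceQuot

/-- The involution of `X ∪_A X` interchanging the two copies of `X`. -/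
def adjSwap (X : Type*) [TopologicalSpace X] (A : Set X) : AdjSpace X A → AdjSpace X A :=
  Quot.map (fun p => (p.1, !p.2)) (by
    rintro p q (rfl | ⟨h1, h2⟩)
    · exact Or.inl rfl
    · exact Or.inr ⟨h1, h2⟩)

lemma adjSwap_invol (X : Type*) [TopologicalSpace X] (A : Set X) (y : AdjSpace X A) :
    adjSwap X A (adjSwap X A y) = y := by
  induction y using Quot.ind with
  | mk p =>
    obtain ⟨x, b⟩ := p
    show Quot.mk _ (x, !!b) = Quot.mk _ (x, b)
    rw [Bool.not_not]

section EffectiveTC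

variable {G X Y : Type*} [Group G] [TopologicalSpace X] [TopologicalSpace Y] [MulAction G Y]

theorem effTCinf_le_effTC (k : ℕ) : effTCinf G Y ≤ effTC G Y (k + 1) k.succ_pos :=
  iInf_le _ k

/-- Travel from `y₁` to `ι (r y₁)` inside its orbit, along `ι ∘ s` to `ι (r y₂)`, and then
inside the orbit of `y₂`; the outer two paths are constant. -/
theorem isEffPlanner_three_preimage {r : C(Y, X)} {ι : C(X, Y)}
    (hι : ∀ y, ι (r y) ∈ MulAction.orbit G y) {U : Set (X × X)} (s : U → C(unitInterval, X))
    (hs : Continuous s) (hs₀ : ∀ u, s u 0 = (u : X × X).1) (hs₁ : ∀ u, s u 1 = (u : X × X).2) :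
    IsEffPlanner G Y 3 three_pos (Prod.map r r ⁻¹' U) := by
  let ρ : Prod.map r r ⁻¹' U → U := fun u => ⟨Prod.map r r u, u.2⟩
  have hρ : Continuous ρ := by fun_prop
  refine ⟨fun u => ![.const _ (u : Y × Y).1, ι.comp (s (ρ u)), .const _ (u : Y × Y).2],
    ?_, ?_, fun u => ⟨rfl, rfl⟩⟩
  · refine continuous_pi fun j => ?_
    fin_cases j
    · exact ContinuousMap.continuous_const'.comp (by fun_prop)
    · exact (ContinuousMap.continuous_postcomp ι).comp (hs.comp hρ)
    · exact ContinuousMap.continuous_const'.comp (by fun_prop)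
  · rintro u j hj
    obtain rfl | rfl : j = 0 ∨ j = 1 := by omega
    · change ι (s (ρ u) 0) ∈ _
      rw [hs₀]
      exact hι _
    · change (u : Y × Y).2 ∈ MulAction.orbit G (ι (s (ρ u) 1))
      rw [hs₁]
      exact MulAction.mem_orbit_symm.mp (hι _)

theorem effTC_three_le_farberTC {r : C(Y, X)} {ι : C(X, Y)}
    (hι : ∀ y, ι (r y) ∈ MulAction.orbit G y) : effTC G Y 3 three_pos ≤ farberTC X := by
  refine le_sInf ?_
  rintro _ ⟨n, rfl, hn, U, hUo, hU, hUs⟩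
  refine sInf_le ⟨n, rfl, hn, fun i => Prod.map r r ⁻¹' U i,
    fun i => (hUo i).preimage (by fun_prop), by simp [← preimage_iUnion, hU], fun i => ?_⟩
  obtain ⟨s, hs, hs₀₁⟩ := hUs i
  exact isEffPlanner_three_preimage hι s hs (fun u => (hs₀₁ u).1) fun u => (hs₀₁ u).2

end EffectiveTC

theorem involutionAction_apply_mem_orbit {Y : Type*} (f : Y → Y) (hf : ∀ y, f (f y) = y) (y : Y) :
    f y ∈ @MulAction.orbit _ _ (involutionAction f hf).toSMul y :=
  ⟨Multiplicative.ofAdd 1, if_pos rfl⟩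

section AdjSpace

variable {X : Type*} [TopologicalSpace X] (A : Set X)

def adjRetr : C(AdjSpace X A, X) :=
  ⟨Quot.lift Prod.fst (by rintro p q (rfl | ⟨h, -⟩) <;> [rfl; exact h]),
    continuous_quot_lift _ continuous_fst⟩

def adjIncl : C(X, AdjSpace X A) :=
  ⟨fun x => Quot.mk _ (x, false), continuous_quot_mk.comp (by fun_prop)⟩

theorem adjIncl_adjRetr_mem_orbit (y : AdjSpace X A) :
    adjIncl A (adjRetr A y) ∈ @MulAction.orbit _ _
      (involutionAction (adjSwap X A) (adjSwap_invol X A)).toSMul y := by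
  induction y using Quot.ind with
  | mk p =>
    obtain ⟨x, _ | _⟩ := p
    · exact @MulAction.mem_orbit_self _ _ _ (involutionAction _ (adjSwap_invol X A)) _
    · exact involutionAction_apply_mem_orbit _ (adjSwap_invol X A) _

end AdjSpace

theorem effTCinf_adjSpace_le_farberTC_general {X : Type*} [TopologicalSpace X] (A : Set X) :
    @effTCinf (Multiplicative (ZMod 2)) (AdjSpace X A) _ _
      (involutionAction (adjSwap X A) (adjSwap_invol X A)) ≤ farberTC X :=
  letI := involutionAction (adjSwap X A) (adjSwap_invol X A)
  (effTCinf_le_effTC 2).trans (effTC_three_le_farberTC (adjIncl_adjRetr_mem_orbit A))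

/-- For a closed subspace `A ⊆ X`, the adjunction space `X ∪_A X`, with the
`ℤ/2`-action interchanging the two copies of `X`, satisfies `TC^{ℤ/2,∞}(X ∪_A X) ≤ TC(X)`. -/
theorem effTCinf_adjSpace_le_farberTC {X : Type*} [TopologicalSpace X] (A : Set X)
    (hA : IsClosed A) :
    @effTCinf (Multiplicative (ZMod 2)) (AdjSpace X A) _ _
      (involutionAction (adjSwap X A) (adjSwap_invol X A)) ≤ farberTC X :=
  effTCinf_adjSpace_le_farberTC_general A
end

section
/- Let n ≥ 1 and let g : S^n → S^n be a continuous fixed-point-free involution of the unit sphere S^n ⊆ ℝ^{n+1} (g ∘ g = id and g(x) ≠ x for all x). Then S^n × S^n is covered by the two open sets U₁ = {(x,y) : y ≠ −x} and U₂ = {(x,y) : y ≠ −g(x)}, each of which admits a (Z/2,2)-motion planner for the Z/2-action generated by g; consequently TC^{Z/2,2}(S^n) ≤ 2 and TC^{Z/2,∞}(S^n) ≤ 2. -/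
open Set

section GeoAux

variable {E : Type*} [NormedAddCommGroup E] [NormedSpace ℝ E]

lemma seg_ne_zero {x y : E} (hx : ‖x‖ = 1) (hy : ‖y‖ = 1) (hxy : y ≠ -x)
    {t : ℝ} (ht0 : 0 ≤ t) (ht1 : t ≤ 1) : (1 - t) • x + t • y ≠ 0 := by
  intro h
  have h1 : (1 - t) • x = -(t • y) := eq_neg_of_add_eq_zero_left h
  have hn : ‖(1 - t) • x‖ = ‖t • y‖ := by rw [h1, norm_neg]
  rw [norm_smul, norm_smul, hx, hy, mul_one, mul_one, Real.norm_eq_abs, Real.norm_eq_abs,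
    abs_of_nonneg (by linarith), abs_of_nonneg ht0] at hn
  have ht : t = 1 / 2 := by linarith
  subst ht
  apply hxy
  have h2 : (1 - 1/2 : ℝ) • x + (1/2 : ℝ) • y = (1/2 : ℝ) • (x + y) := by
    rw [smul_add]; norm_num
  rw [h2] at h
  have : x + y = 0 := by
    have := smul_eq_zero.mp h
    rcases this with h' | h'
    · norm_num at h'
    · exact h'
  rw [eq_neg_iff_add_eq_zero, add_comm]; exact this

lemma norm_nrm {v : E} (hv : v ≠ 0) : ‖‖v‖⁻¹ • v‖ = 1 := by
  rw [norm_smul, Real.norm_eq_abs, abs_of_nonneg (by positivity)]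
  exact inv_mul_cancel₀ (norm_ne_zero_iff.mpr hv)

end GeoAux

section Sphere

variable {m : ℕ}

local notation "E" => EuclideanSpace ℝ (Fin m)
local notation "Sph" => Metric.sphere (0 : EuclideanSpace ℝ (Fin m)) 1

lemma sph_norm (x : Sph) : ‖(x : E)‖ = 1 := by
  have := x.2
  rwa [mem_sphere_zero_iff_norm] at this

lemma sph_seg_ne_zero (x y : Sph) (h : (y : E) ≠ -(x : E)) (t : unitInterval) :
    (1 - (t : ℝ)) • (x : E) + (t : ℝ) • (y : E) ≠ 0 :=
  seg_ne_zero (sph_norm x) (sph_norm y) h t.2.1 t.2.2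

/-- The normalized-straight-line geodesic from `x` to `y` on the sphere,
for non-antipodal `x, y`. -/
noncomputable def geoS (x y : Sph) (h : (y : E) ≠ -(x : E)) : C(unitInterval, Sph) :=
  ⟨fun t => ⟨‖(1 - (t : ℝ)) • (x : E) + (t : ℝ) • (y : E)‖⁻¹ •
      ((1 - (t : ℝ)) • (x : E) + (t : ℝ) • (y : E)),
    by rw [mem_sphere_zero_iff_norm]; exact norm_nrm (sph_seg_ne_zero x y h t)⟩, by
  apply Continuous.subtype_mk
  have hv : Continuous fun t : unitInterval =>
      (1 - (t : ℝ)) • (x : E) + (t : ℝ) • (y : E) := by fun_prop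
  exact (hv.norm.inv₀ fun t =>
    norm_ne_zero_iff.mpr (sph_seg_ne_zero x y h t)).smul hv⟩

lemma geoS_zero (x y : Sph) (h : (y : E) ≠ -(x : E)) : geoS x y h 0 = x := by
  apply Subtype.ext
  show ‖(1 - ((0:unitInterval) : ℝ)) • (x : E) + ((0:unitInterval) : ℝ) • (y : E)‖⁻¹ • _ = _
  simp [sph_norm x]

lemma geoS_one (x y : Sph) (h : (y : E) ≠ -(x : E)) : geoS x y h 1 = y := by
  apply Subtype.ext
  show ‖(1 - ((1:unitInterval) : ℝ)) • (x : E) + ((1:unitInterval) : ℝ) • (y : E)‖⁻¹ • _ = _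
  simp [sph_norm y]

lemma continuous_geoS {Z : Type*} [TopologicalSpace Z] (a b : Z → Sph)
    (ha : Continuous a) (hb : Continuous b) (h : ∀ z, ((b z : E)) ≠ -(a z : E)) :
    Continuous fun z => geoS (a z) (b z) (h z) := by
  apply ContinuousMap.continuous_of_continuous_uncurry
  apply Continuous.subtype_mk
  have hv : Continuous fun p : Z × unitInterval =>
      (1 - (p.2 : ℝ)) • ((a p.1 : E)) + (p.2 : ℝ) • ((b p.1 : E)) := by
    have h1 : Continuous fun p : Z × unitInterval => ((a p.1 : E)) :=
      continuous_subtype_val.comp (ha.comp continuous_fst)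
    have h2 : Continuous fun p : Z × unitInterval => ((b p.1 : E)) :=
      continuous_subtype_val.comp (hb.comp continuous_fst)
    have ht : Continuous fun p : Z × unitInterval => (p.2 : ℝ) :=
      continuous_subtype_val.comp continuous_snd
    exact ((continuous_const.sub ht).smul h1).add (ht.smul h2)
  exact (hv.norm.inv₀ fun p =>
    norm_ne_zero_iff.mpr (sph_seg_ne_zero (a p.1) (b p.1) (h p.1) p.2)).smul hv

end Sphere

section MainAux
set_option maxHeartbeats 2000000

variable {m : ℕ}

local notation "E'" => EuclideanSpace ℝ (Fin m)
local notation "S'" => Metric.sphere (0 : EuclideanSpace ℝ (Fin m)) 1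

lemma sphere_planner₁ (g : S' → S') (hg2 : ∀ x, g (g x) = x) :
    @IsEffPlanner (Multiplicative (ZMod 2)) S' _ _ (involutionAction g hg2) 2 (by norm_num)
      {q : S' × S' | (q.2 : E') ≠ -(q.1 : E')} := by
  letI A : MulAction (Multiplicative (ZMod 2)) S' := involutionAction g hg2
  set U₁ : Set (S' × S') := {q | (q.2 : E') ≠ -(q.1 : E')} with hU₁
  refine ⟨fun u => ![geoS u.1.1 u.1.2 u.2, ContinuousMap.const _ u.1.2], ?_, ?_, ?_⟩
  · apply continuous_pi
    intro i
    have hg := continuous_geoS (Z := U₁) (fun u => u.1.1) (fun u => u.1.2)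
      (continuous_fst.comp continuous_subtype_val)
      (continuous_snd.comp continuous_subtype_val) (fun u => u.2)
    have hc := ContinuousMap.continuous_const' (X := unitInterval) (Y := S').comp
      (continuous_snd.comp (continuous_subtype_val (p := (· ∈ U₁))))
    fin_cases i
    · exact hg
    · exact hc
  · intro u i h
    have hi : i = 0 := by omega
    subst hi
    show (ContinuousMap.const unitInterval u.1.2) 0 ∈
      MulAction.orbit (Multiplicative (ZMod 2)) ((geoS u.1.1 u.1.2 u.2) 1)
    rw [geoS_one]
    exact MulAction.mem_orbit_self _
  · intro u
    constructor
    · show (geoS u.1.1 u.1.2 u.2) 0 = u.1.1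
      exact geoS_zero _ _ _
    · show (ContinuousMap.const unitInterval u.1.2) 1 = u.1.2
      rfl

lemma sphere_planner₂ (g : S' → S') (hgc : Continuous g) (hg2 : ∀ x, g (g x) = x) :
    @IsEffPlanner (Multiplicative (ZMod 2)) S' _ _ (involutionAction g hg2) 2 (by norm_num)
      {q : S' × S' | (q.2 : E') ≠ -(g q.1 : E')} := by
  letI A : MulAction (Multiplicative (ZMod 2)) S' := involutionAction g hg2
  set U₂ : Set (S' × S') := {q | (q.2 : E') ≠ -(g q.1 : E')} with hU₂
  refine ⟨fun u => ![ContinuousMap.const _ u.1.1, geoS (g u.1.1) u.1.2 u.2], ?_, ?_, ?_⟩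
  · apply continuous_pi
    intro i
    have hg := continuous_geoS (Z := U₂) (fun u => g u.1.1) (fun u => u.1.2)
      (hgc.comp (continuous_fst.comp continuous_subtype_val))
      (continuous_snd.comp continuous_subtype_val) (fun u => u.2)
    have hc := ContinuousMap.continuous_const' (X := unitInterval) (Y := S').comp
      (continuous_fst.comp (continuous_subtype_val (p := (· ∈ U₂))))
    fin_cases i
    · exact hc
    · exact hg
  · intro u i h
    have hi : i = 0 := by omega
    subst hi
    show (geoS (g u.1.1) u.1.2 u.2) 0 ∈
      MulAction.orbit (Multiplicative (ZMod 2)) ((ContinuousMap.const unitInterval u.1.1) 1)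
    rw [geoS_zero]
    refine ⟨Multiplicative.ofAdd 1, ?_⟩
    show (if (Multiplicative.toAdd (Multiplicative.ofAdd (1 : ZMod 2))) = 1
      then g u.1.1 else u.1.1) = g u.1.1
    simp
  · intro u
    constructor
    · show (ContinuousMap.const unitInterval u.1.1) 0 = u.1.1
      rfl
    · show (geoS (g u.1.1) u.1.2 u.2) 1 = u.1.2
      exact geoS_one _ _ _

lemma sphere_open₁ :
    IsOpen {q : S' × S' | (q.2 : E') ≠ -(q.1 : E')} := by
  apply isOpen_ne_fun (f := fun q : S' × S' => (q.2 : E')) (g := fun q : S' × S' => -(q.1 : E'))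
  · exact continuous_subtype_val.comp continuous_snd
  · exact (continuous_subtype_val.comp continuous_fst).neg

lemma sphere_open₂ (g : S' → S') (hgc : Continuous g) :
    IsOpen {q : S' × S' | (q.2 : E') ≠ -(g q.1 : E')} := by
  apply isOpen_ne_fun (f := fun q : S' × S' => (q.2 : E'))
    (g := fun q : S' × S' => -(g q.1 : E'))
  · exact continuous_subtype_val.comp continuous_snd
  · exact (continuous_subtype_val.comp (hgc.comp continuous_fst)).neg

lemma sphere_cover (g : S' → S') (hfree : ∀ x, g x ≠ x) :
    {q : S' × S' | (q.2 : E') ≠ -(q.1 : E')} ∪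
      {q : S' × S' | (q.2 : E') ≠ -(g q.1 : E')} = Set.univ := by
  ext q
  simp only [Set.mem_union, Set.mem_setOf_eq, Set.mem_univ, iff_true]
  by_contra hc
  push_neg at hc
  obtain ⟨h1, h2⟩ := hc
  have : ((q.1 : S') : E') = ((g q.1 : S') : E') := neg_injective (h1 ▸ h2)
  exact hfree q.1 (Subtype.coe_injective this).symm

lemma sphere_effTC_le (g : S' → S') (hgc : Continuous g) (hg2 : ∀ x, g (g x) = x)
    (hfree : ∀ x, g x ≠ x) :
    @effTC (Multiplicative (ZMod 2)) S' _ _ (involutionAction g hg2) 2 (by norm_num) ≤ 2 := by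
  letI A : MulAction (Multiplicative (ZMod 2)) S' := involutionAction g hg2
  set U₁ : Set (S' × S') := {q | (q.2 : E') ≠ -(q.1 : E')} with hU₁
  set U₂ : Set (S' × S') := {q | (q.2 : E') ≠ -(g q.1 : E')} with hU₂
  apply sInf_le
  refine ⟨2, by norm_num, by norm_num, ![U₁, U₂], ?_, ?_, ?_⟩
  · intro i; fin_cases i
    · exact sphere_open₁
    · exact sphere_open₂ g hgc
  · rw [show (⋃ i, (![U₁, U₂] : Fin 2 → Set (S' × S')) i) = U₁ ∪ U₂ from by
      ext q; simp [Fin.exists_fin_two]]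
    exact sphere_cover g hfree
  · intro i; fin_cases i
    · exact sphere_planner₁ g hg2
    · exact sphere_planner₂ g hgc hg2

end MainAux

/-- For a continuous fixed-point-free involution `g` of `S^n ⊆ ℝ^{n+1}`,
the two open sets `U₁ = {(x,y) : y ≠ -x}` and `U₂ = {(x,y) : y ≠ -g(x)}` cover `S^n × S^n`
and each admits a `(ℤ/2,2)`-motion planner for the action generated by `g`; consequently
`TC^{ℤ/2,2}(S^n) ≤ 2` and `TC^{ℤ/2,∞}(S^n) ≤ 2`. -/
theorem effTC_free_involution_sphere (n : ℕ) (hn : 1 ≤ n)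
    (g : Metric.sphere (0 : EuclideanSpace ℝ (Fin (n + 1))) 1 →
      Metric.sphere (0 : EuclideanSpace ℝ (Fin (n + 1))) 1)
    (hgc : Continuous g) (hg2 : ∀ x, g (g x) = x) (hfree : ∀ x, g x ≠ x) :
    IsOpen {q : Metric.sphere (0 : EuclideanSpace ℝ (Fin (n + 1))) 1 ×
        Metric.sphere (0 : EuclideanSpace ℝ (Fin (n + 1))) 1 |
      (q.2 : EuclideanSpace ℝ (Fin (n + 1))) ≠ -(q.1 : EuclideanSpace ℝ (Fin (n + 1)))} ∧
    IsOpen {q : Metric.sphere (0 : EuclideanSpace ℝ (Fin (n + 1))) 1 ×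
        Metric.sphere (0 : EuclideanSpace ℝ (Fin (n + 1))) 1 |
      (q.2 : EuclideanSpace ℝ (Fin (n + 1))) ≠ -(g q.1 : EuclideanSpace ℝ (Fin (n + 1)))} ∧
    {q : Metric.sphere (0 : EuclideanSpace ℝ (Fin (n + 1))) 1 ×
        Metric.sphere (0 : EuclideanSpace ℝ (Fin (n + 1))) 1 |
      (q.2 : EuclideanSpace ℝ (Fin (n + 1))) ≠ -(q.1 : EuclideanSpace ℝ (Fin (n + 1)))} ∪
    {q : Metric.sphere (0 : EuclideanSpace ℝ (Fin (n + 1))) 1 ×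
        Metric.sphere (0 : EuclideanSpace ℝ (Fin (n + 1))) 1 |
      (q.2 : EuclideanSpace ℝ (Fin (n + 1))) ≠ -(g q.1 : EuclideanSpace ℝ (Fin (n + 1)))} =
      Set.univ ∧
    @IsEffPlanner (Multiplicative (ZMod 2))
      (Metric.sphere (0 : EuclideanSpace ℝ (Fin (n + 1))) 1) _ _
      (involutionAction g hg2) 2 (by norm_num)
      {q : Metric.sphere (0 : EuclideanSpace ℝ (Fin (n + 1))) 1 ×
          Metric.sphere (0 : EuclideanSpace ℝ (Fin (n + 1))) 1 |
        (q.2 : EuclideanSpace ℝ (Fin (n + 1))) ≠ -(q.1 : EuclideanSpace ℝ (Fin (n + 1)))} ∧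
    @IsEffPlanner (Multiplicative (ZMod 2))
      (Metric.sphere (0 : EuclideanSpace ℝ (Fin (n + 1))) 1) _ _
      (involutionAction g hg2) 2 (by norm_num)
      {q : Metric.sphere (0 : EuclideanSpace ℝ (Fin (n + 1))) 1 ×
          Metric.sphere (0 : EuclideanSpace ℝ (Fin (n + 1))) 1 |
        (q.2 : EuclideanSpace ℝ (Fin (n + 1))) ≠ -(g q.1 : EuclideanSpace ℝ (Fin (n + 1)))} ∧
    @effTC (Multiplicative (ZMod 2))
      (Metric.sphere (0 : EuclideanSpace ℝ (Fin (n + 1))) 1) _ _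
      (involutionAction g hg2) 2 (by norm_num) ≤ 2 ∧
    @effTCinf (Multiplicative (ZMod 2))
      (Metric.sphere (0 : EuclideanSpace ℝ (Fin (n + 1))) 1) _ _
      (involutionAction g hg2) ≤ 2 := by

  have htc := sphere_effTC_le g hgc hg2 hfree
  refine ⟨sphere_open₁, sphere_open₂ g hgc, sphere_cover g hfree,
    sphere_planner₁ g hg2, sphere_planner₂ g hgc hg2, htc, le_trans (iInf_le _ 1) htc⟩
end
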